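/- arXiv:0901.0316 — 3 statements merged into one kernel-verified Lean document; each statement's English description precedes it below -/
import Mathlib

section
/- Let G be a North–South skew product over the Bernoulli shift with arcs I, J. Then the set S = ∩_{k≥0} G^{−k}(Σ² × J) is the graph of a continuous function γ⁻ : Σ² → J; in particular S intersects every fiber {ω} × S¹ in exactly one point, and S has measure zero with respect to the product measure P × Leb on Σ² × S¹. -/
open MeasureTheory Set Filter Topology

instance : Fact ((0 : ℝ) < 2) := ⟨by norm_num⟩

/-- The circle `S¹ = ℝ/2ℤ`. -/
abbrev S1 := AddCircle (2 : ℝ)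

/-- The space `Σ² = {0,1}^ℤ` of bi-infinite binary sequences (`false` = 0, `true` = 1),
with its product (= standard metric) topology and product measurable structure. -/
abbrev Sig2 := ℤ → Bool

/-- The Bernoulli shift `(σω)_k = ω_{k+1}`. -/
def shift (ω : Sig2) : Sig2 := fun k => ω (k + 1)

/-- The inverse iterate `σ^{−j}ω`, i.e. `(σ^{−j}ω)_k = ω_{k−j}`. -/
def shiftInv (j : ℕ) (ω : Sig2) : Sig2 := fun k => ω (k - (j : ℤ))

/-- The skew product `G(ω,x) = (σω, g_ω(x))` over the Bernoulli shift. -/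
def skew (g : Sig2 → S1 ≃ₜ S1) (p : Sig2 × S1) : Sig2 × S1 :=
  (shift p.1, g p.1 p.2)

/-- `G : ℝ → ℝ` is a lift of the circle map `f : S¹ → S¹`. -/
def IsLift (f : S1 → S1) (G : ℝ → ℝ) : Prop :=
  ∀ x : ℝ, ((G x : ℝ) : S1) = f ((x : ℝ) : S1)

/-- `f` has derivative `c` at the point `p` of the circle (computed via any lift). -/
def HasCircDeriv (f : S1 → S1) (p : S1) (c : ℝ) : Prop :=
  ∃ (G : ℝ → ℝ) (x : ℝ), IsLift f G ∧ ((x : ℝ) : S1) = p ∧ HasDerivAt G c x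

/-- `I` is a closed arc of `S¹`, the image of a closed interval of length `< 2`. -/
def IsClosedArc (I : Set S1) : Prop :=
  ∃ a b : ℝ, a ≤ b ∧ b - a < 2 ∧ I = (fun x : ℝ => ((x : ℝ) : S1)) '' Icc a b

/-- A **North–South skew product** over the Bernoulli shift, with closed arcs `I, J`:
every fiber map is a `C¹` diffeomorphism of the circle with exactly one attracting and one
repelling hyperbolic fixed point; all attractors lie strictly inside `I`, all repellers
strictly inside `J`; `I` is forward invariant and uniformly contracted, `J` is backward
invariant and uniformly contracted for the inverse maps; and `ω ↦ g_ω` is continuous in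
the `C⁰` topology. -/
structure IsNorthSouth (g : Sig2 → S1 ≃ₜ S1) (I J : Set S1) : Prop where
  arcI : IsClosedArc I
  arcJ : IsClosedArc J
  disj : Disjoint I J
  smooth : ∀ ω, ∃ G : ℝ → ℝ, IsLift (g ω) G ∧ ContDiff ℝ 1 G ∧ ∀ x, deriv G x ≠ 0
  fixedPts : ∀ ω, ∃ a r : S1, a ≠ r ∧ g ω a = a ∧ g ω r = r ∧
    (∀ p, g ω p = p → p = a ∨ p = r) ∧
    (∃ c, HasCircDeriv (g ω) a c ∧ |c| < 1) ∧
    (∃ c, HasCircDeriv (g ω) r c ∧ 1 < |c|) ∧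
    a ∈ interior I ∧ r ∈ interior J
  mapsI : ∀ ω, MapsTo (g ω) I I
  lipI : ∃ l : NNReal, (l : ℝ) < 1 ∧ ∀ ω, LipschitzOnWith l (g ω) I
  mapsJ : ∀ ω, MapsTo (g ω).symm J J
  lipJ : ∃ l' : NNReal, (l' : ℝ) < 1 ∧ ∀ ω, LipschitzOnWith l' (g ω).symm J
  contg : Continuous fun ω => ((g ω : C(S1, S1)))

/-- The backward composition `g_{σ^{−1}ω} ∘ g_{σ^{−2}ω} ∘ ⋯ ∘ g_{σ^{−k}ω}`. -/
def backComp (g : Sig2 → S1 ≃ₜ S1) (ω : Sig2) : ℕ → S1 → S1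
  | 0 => id
  | k + 1 => backComp g ω k ∘ (g (shiftInv (k + 1) ω))


/-!
Write `Fₖ = g_{σ^{k-1}ω} ∘ ⋯ ∘ g_ω`, so that the fiber of `S` over `ω` is `⋂ₖ Fₖ⁻¹(J)`.
Since every `g_ω⁻¹` maps `J` into itself with Lipschitz constant `l' < 1`, these are nested
nonempty closed sets of diameter at most `l'ᵏ diam J`; hence each fiber is a single point
`γ⁻(ω) ∈ J`. The set `S` is closed, and a map into the compact circle with closed graph is
continuous. Finally, a measurable graph has singleton fibers, which are Lebesgue-null, so it is
null for `P × Leb`.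
-/

open scoped ENNReal NNReal

theorem continuous_of_isClosed_graph {X Y : Type*} [TopologicalSpace X] [TopologicalSpace Y]
    [CompactSpace Y] {f : X → Y} (hf : IsClosed {p : X × Y | p.2 = f p.1}) : Continuous f := by
  refine continuous_iff_isClosed.2 fun C hC => ?_
  have : f ⁻¹' C = Prod.fst '' ({p : X × Y | p.2 = f p.1} ∩ univ ×ˢ C) := by
    ext x
    constructor
    · intro hx
      exact ⟨(x, f x), ⟨rfl, mem_univ x, hx⟩, rfl⟩
    · rintro ⟨p, ⟨hp, -, hpC⟩, rfl⟩
      rwa [mem_preimage, ← hp]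
  rw [this]
  exact isClosedMap_fst_of_compactSpace _ (hf.inter (isClosed_univ.prod hC))

theorem LipschitzOnWith.ediam_image_le {X Y : Type*} [PseudoEMetricSpace X]
    [PseudoEMetricSpace Y] {K : ℝ≥0} {f : X → Y} {s : Set X} (hf : LipschitzOnWith K f s) :
    Metric.ediam (f '' s) ≤ K * Metric.ediam s :=
  Metric.ediam_image_le_iff.2 fun _ hx _ hy =>
    hf.edist_le_mul_of_le hx hy (Metric.edist_le_ediam_of_mem hx hy)

theorem MeasureTheory.Measure.prod_graph_eq_zero {α β : Type*} [MeasurableSpace α]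
    [MeasurableSpace β] (μ : Measure α) (ν : Measure β) [NullSingletonClass ν] {f : α → β}
    (hf : MeasurableSet {p : α × β | p.2 = f p.1}) : μ.prod ν {p | p.2 = f p.1} = 0 :=
  nonpos_iff_eq_zero.1 <| (Measure.prod_apply_le hf).trans_eq <| by simp

instance AddCircle.nullSingletonClass_volume {T : ℝ} [Fact (0 < T)] :
    NullSingletonClass (volume : Measure (AddCircle T)) where
  measure_singleton x := by
    simpa [Metric.closedBall_zero] using AddCircle.volume_closedBall T (x := x) 0

lemma IsClosedArc.isCompact {I : Set S1} (hI : IsClosedArc I) : IsCompact I := by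
  obtain ⟨a, b, -, -, rfl⟩ := hI
  exact isCompact_Icc.image (AddCircle.continuous_mk' 2)

lemma IsClosedArc.nonempty {I : Set S1} (hI : IsClosedArc I) : I.Nonempty := by
  obtain ⟨a, b, hab, -, rfl⟩ := hI
  exact (nonempty_Icc.2 hab).image _

lemma continuous_shift : Continuous shift :=
  continuous_pi fun k => continuous_apply (k + 1)

lemma continuous_skew {g : Sig2 → S1 ≃ₜ S1} (hg : Continuous fun ω => (g ω : C(S1, S1))) :
    Continuous (skew g) :=
  (continuous_shift.comp continuous_fst).prodMk
    (ContinuousEval.continuous_eval.comp ((hg.comp continuous_fst).prodMk continuous_snd))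

namespace NorthSouth

variable (g : Sig2 → S1 ≃ₜ S1)

/-- `fiberIter g k ω = g_{σ^{k-1}ω} ∘ ⋯ ∘ g_ω`. -/
def fiberIter : ℕ → Sig2 → S1 ≃ₜ S1
  | 0, _ => Homeomorph.refl S1
  | k + 1, ω => (fiberIter k ω).trans (g (shift^[k] ω))

lemma skew_iterate_apply (k : ℕ) (ω : Sig2) (x : S1) :
    (skew g)^[k] (ω, x) = (shift^[k] ω, fiberIter g k ω x) := by
  induction k with
  | zero => rfl
  | succ k ih =>
    rw [Function.iterate_succ_apply', ih, Function.iterate_succ_apply']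
    rfl

def stableSet (J : Set S1) : Set (Sig2 × S1) :=
  ⋂ k : ℕ, (skew g)^[k] ⁻¹' (univ ×ˢ J)

lemma preimage_mk_stableSet (J : Set S1) (ω : Sig2) :
    Prod.mk ω ⁻¹' stableSet g J = ⋂ k, fiberIter g k ω ⁻¹' J := by
  ext x
  simp [stableSet, skew_iterate_apply]

lemma isClosed_stableSet (hg : Continuous fun ω => (g ω : C(S1, S1))) {J : Set S1}
    (hJ : IsClosed J) : IsClosed (stableSet g J) :=
  isClosed_iInter fun k =>
    (isClosed_univ.prod hJ).preimage ((continuous_skew hg).iterate k)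

variable {g} {J : Set S1}

section Contraction

variable (hmaps : ∀ ω, MapsTo (g ω).symm J J)
include hmaps

lemma fiberIter_succ_preimage_subset (k : ℕ) (ω : Sig2) :
    fiberIter g (k + 1) ω ⁻¹' J ⊆ fiberIter g k ω ⁻¹' J := fun x hx => by
  simpa [fiberIter] using hmaps (shift^[k] ω) hx

lemma lipschitzOnWith_fiberIter_symm {l : ℝ≥0} (hlip : ∀ ω, LipschitzOnWith l (g ω).symm J)
    (k : ℕ) (ω : Sig2) : LipschitzOnWith (l ^ k) (fiberIter g k ω).symm J := by
  induction k with
  | zero => simpa [fiberIter] using LipschitzWith.id.lipschitzOnWith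
  | succ k ih => exact pow_succ l k ▸ ih.comp (hlip _) (hmaps _)

lemma ediam_fiberIter_preimage_le {l : ℝ≥0} (hlip : ∀ ω, LipschitzOnWith l (g ω).symm J)
    (k : ℕ) (ω : Sig2) :
    Metric.ediam (fiberIter g k ω ⁻¹' J) ≤ (l : ℝ≥0∞) ^ k * Metric.ediam J := by
  rw [← Homeomorph.image_symm]
  simpa using (lipschitzOnWith_fiberIter_symm hmaps hlip k ω).ediam_image_le

lemma nonempty_preimage_mk_stableSet (hJ : IsClosed J) (hJne : J.Nonempty) (ω : Sig2) :
    (Prod.mk ω ⁻¹' stableSet g J).Nonempty := by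
  rw [preimage_mk_stableSet]
  exact IsCompact.nonempty_iInter_of_sequence_nonempty_isCompact_isClosed _
    (fiberIter_succ_preimage_subset hmaps · ω)
    (fun k => (fiberIter g k ω).surjective.nonempty_preimage.2 hJne) hJ.isCompact
    (fun k => hJ.preimage (fiberIter g k ω).continuous)

lemma subsingleton_preimage_mk_stableSet (hJ : IsClosed J) {l : ℝ≥0} (hl : l < 1)
    (hlip : ∀ ω, LipschitzOnWith l (g ω).symm J) (ω : Sig2) :
    (Prod.mk ω ⁻¹' stableSet g J).Subsingleton := by
  have hdiam : Metric.ediam J ≠ ⊤ := hJ.isCompact.isBounded.ediam_ne_top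
  have hshrink : Tendsto (fun k => (l : ℝ≥0∞) ^ k * Metric.ediam J) atTop (𝓝 0) := by
    simpa using ENNReal.Tendsto.mul_const (ENNReal.tendsto_pow_atTop_nhds_zero_of_lt_one
      (ENNReal.coe_lt_one_iff.2 hl)) (Or.inr hdiam)
  refine Metric.ediam_eq_zero_iff.1 (le_antisymm (ge_of_tendsto' hshrink fun k => ?_) bot_le)
  rw [preimage_mk_stableSet]
  exact (Metric.ediam_mono (iInter_subset _ k)).trans
    (ediam_fiberIter_preimage_le hmaps hlip k ω)

end Contraction

theorem existsUnique_mem_stableSet (hmaps : ∀ ω, MapsTo (g ω).symm J J) (hJ : IsClosed J)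
    (hJne : J.Nonempty) {l : ℝ≥0} (hl : l < 1) (hlip : ∀ ω, LipschitzOnWith l (g ω).symm J)
    (ω : Sig2) : ∃! x, (ω, x) ∈ stableSet g J := by
  obtain ⟨x, hx⟩ := nonempty_preimage_mk_stableSet hmaps hJ hJne ω
  exact ⟨x, hx, fun _ hy => subsingleton_preimage_mk_stableSet hmaps hJ hl hlip ω hy hx⟩

lemma stableSet_subset_prod : stableSet g J ⊆ univ ×ˢ J :=
  iInter_subset (fun k => (skew g)^[k] ⁻¹' (univ ×ˢ J)) 0

end NorthSouth

open NorthSouth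

theorem stmt_4_general (g : Sig2 → S1 ≃ₜ S1) (I J : Set S1) (hNS : IsNorthSouth g I J)
    (P : Measure Sig2) :
    ∃ γm : Sig2 → S1, Continuous γm ∧ (∀ ω, γm ω ∈ J) ∧
      (⋂ k : ℕ, (skew g)^[k] ⁻¹' (univ ×ˢ J)) = {p : Sig2 × S1 | p.2 = γm p.1} ∧
      (∀ ω, ∃! x : S1, (ω, x) ∈ ⋂ k : ℕ, (skew g)^[k] ⁻¹' (univ ×ˢ J)) ∧
      (P.prod (volume : Measure S1)) (⋂ k : ℕ, (skew g)^[k] ⁻¹' (univ ×ˢ J)) = 0 := by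
  obtain ⟨l, hl, hlip⟩ := hNS.lipJ
  have hJ : IsClosed J := hNS.arcJ.isCompact.isClosed
  have hunique (ω : Sig2) : ∃! x, (ω, x) ∈ stableSet g J :=
    existsUnique_mem_stableSet hNS.mapsJ hJ hNS.arcJ.nonempty (NNReal.coe_lt_one.1 hl) hlip ω
  choose γ hγ hγ_unique using hunique
  have hgraph : stableSet g J = {p | p.2 = γ p.1} :=
    ext fun p => ⟨hγ_unique p.1 p.2, fun hp => (Prod.ext rfl hp : p = (p.1, γ p.1)) ▸ hγ p.1⟩
  have hclosed : IsClosed {p : Sig2 × S1 | p.2 = γ p.1} :=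
    hgraph ▸ isClosed_stableSet g hNS.contg hJ
  refine ⟨γ, continuous_of_isClosed_graph hclosed,
    fun ω => (stableSet_subset_prod (hγ ω)).2, hgraph,
    fun ω => ⟨γ ω, hγ ω, hγ_unique ω⟩, ?_⟩
  change P.prod volume (stableSet g J) = 0
  rw [hgraph]
  exact P.prod_graph_eq_zero (volume : Measure S1) hclosed.measurableSet

/-- For a North–South skew product `G` with arcs `I, J`, the set
`S = ∩_{k≥0} G^{−k}(Σ² × J)` is the graph of a continuous function `γ⁻ : Σ² → J`;
in particular `S` meets every fiber `{ω} × S¹` in exactly one point, and `S` has measure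
zero with respect to `P × Leb`. -/
theorem stmt_4 (g : Sig2 → S1 ≃ₜ S1) (I J : Set S1) (hNS : IsNorthSouth g I J)
    (P : Measure Sig2) [IsProbabilityMeasure P]
    (hP : ∀ (s : Finset ℤ) (α : ℤ → Bool),
      P {ω : Sig2 | ∀ i ∈ s, ω i = α i} = (1 / 2 : ENNReal) ^ s.card) :
    ∃ γm : Sig2 → S1, Continuous γm ∧ (∀ ω, γm ω ∈ J) ∧
      (⋂ k : ℕ, (skew g)^[k] ⁻¹' (univ ×ˢ J)) = {p : Sig2 × S1 | p.2 = γm p.1} ∧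
      (∀ ω, ∃! x : S1, (ω, x) ∈ ⋂ k : ℕ, (skew g)^[k] ⁻¹' (univ ×ˢ J)) ∧
      (P.prod (volume : Measure S1)) (⋂ k : ℕ, (skew g)^[k] ⁻¹' (univ ×ˢ J)) = 0 :=
  stmt_4_general g I J hNS P
end

section
/- Fix an integer n ≥ 100 and set ν = 1/n. Identify the closed arc I = [−ν, 1+ν] of S¹ = ℝ/2ℤ with the corresponding real interval. Let G(ω,x) = (σω, g_ω(x)) be a skew product over the Bernoulli shift whose fiber maps g_ω are orientation-preserving homeomorphisms of S¹ satisfying, for every ω ∈ Σ²: g_ω(I) ⊆ I; if ω₀ = 1 then g_ω(−ν) > 3/4; and if ω₀ = 0 then g_ω is differentiable on I with derivative everywhere in the interval [1−ν, 1). Then for every integer k > n, every ω ∈ Σ², and every x ∈ I: if π(G^k(ω,x)) lies in the open arc (0, 1/4), then ω_{k−n} = ω_{k−n+1} = ⋯ = ω_{k−1} = 0. -/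
open MeasureTheory Set Filter Topology

/-- A circle map is orientation preserving if it admits a strictly monotone lift
commuting with the deck translation `x ↦ x + 2`. -/
def OrientPreserving (f : S1 → S1) : Prop :=
  ∃ G : ℝ → ℝ, StrictMono G ∧ (∀ x, G (x + 2) = G x + 2) ∧
    ∀ x : ℝ, ((G x : ℝ) : S1) = f ((x : ℝ) : S1)

/-!
Track the fiber coordinate as a real number in `I = [-ν, 1 + ν]`; this is possible because `I`
is shorter than the circle, so the projection is injective on it. A symbol `1` sends all of `I`
above `3/4`: the orientation-preserving lift of `g_ω` sends `-ν` to `t > 3/4` and cannot leave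
`I` through its top end without crossing the gap `(1 + ν, 2 - ν)`, which misses `g_ω(I)`.
A symbol `0` shrinks the distance to `-ν` by a factor at least `1 - ν` (mean value theorem).
So if `ω_i = 1` with `k - n ≤ i < k`, then `π(G^k(ω,x)) + ν ≥ (1 - ν)^(n-1) (3/4 + ν)`, and
`(1 - 1/n)^(n-1) ≥ e⁻¹` makes this exceed `1/4 + ν`.
-/
theorem shift_iterate_apply (j : ℕ) (ω : Sig2) (m : ℤ) : (shift^[j] ω) m = ω (m + j) := by
  induction j generalizing m with
  | zero => simp
  | succ j ih =>
    rw [Function.iterate_succ_apply', shift, ih]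
    push_cast
    ring_nf

theorem fst_iterate_skew (g : Sig2 → S1 ≃ₜ S1) (j : ℕ) (p : Sig2 × S1) :
    ((skew g)^[j] p).1 = shift^[j] p.1 := by
  induction j with
  | zero => rfl
  | succ j ih => rw [Function.iterate_succ_apply', Function.iterate_succ_apply', ← ih]; rfl

theorem snd_iterate_succ_skew (g : Sig2 → S1 ≃ₜ S1) (j : ℕ) (p : Sig2 × S1) :
    ((skew g)^[j + 1] p).2 = g (shift^[j] p.1) ((skew g)^[j] p).2 := by
  rw [Function.iterate_succ_apply', ← fst_iterate_skew]
  rfl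

theorem snd_iterate_skew_mem {g : Sig2 → S1 ≃ₜ S1} {A : Set S1} (hg : ∀ ω, MapsTo (g ω) A A)
    {p : Sig2 × S1} (hp : p.2 ∈ A) (j : ℕ) : ((skew g)^[j] p).2 ∈ A := by
  induction j with
  | zero => exact hp
  | succ j ih => rw [snd_iterate_succ_skew]; exact hg _ ih

theorem exists_real_orbit {g : Sig2 → S1 ≃ₜ S1} {s : Set ℝ}
    (hg : ∀ ω, MapsTo (g ω) ((↑) '' s) ((↑) '' s)) (ω : Sig2) {x : ℝ} (hx : x ∈ s) :
    ∃ z : ℕ → ℝ, (∀ j, z j ∈ s) ∧ (∀ j, (z j : S1) = ((skew g)^[j] (ω, (x : S1))).2) ∧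
      ∀ j, (z (j + 1) : S1) = g (shift^[j] ω) (z j) := by
  choose z hzs hz using snd_iterate_skew_mem hg (p := (ω, (x : S1))) ⟨x, hx, rfl⟩
  exact ⟨z, hzs, hz, fun j => by rw [hz, hz, snd_iterate_succ_skew]⟩

theorem coe_eq_coe_iff_exists_int {a b : ℝ} : (a : S1) = b ↔ ∃ m : ℤ, a = b + m * 2 := by
  rw [QuotientAddGroup.eq_iff_sub_mem, AddSubgroup.mem_zmultiples_iff]
  refine exists_congr fun m => ?_
  rw [zsmul_eq_mul]
  constructor <;> intro h <;> linarith

theorem injOn_coe_Icc {a b : ℝ} (hab : b < a + 2) : InjOn ((↑) : ℝ → S1) (Icc a b) :=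
  fun _ hx _ hy h => (AddCircle.coe_eq_coe_iff_of_mem_Ico ⟨hx.1, by linarith [hx.2]⟩
    ⟨hy.1, by linarith [hy.2]⟩).1 h

namespace OrientPreserving

variable {f : S1 → S1}

theorem exists_lift_eq (hf : OrientPreserving f) {x t : ℝ} (h : f x = t) :
    ∃ G : ℝ → ℝ, StrictMono G ∧ (∀ y, G (y + 2) = G y + 2) ∧ (∀ y : ℝ, (G y : S1) = f y) ∧
      G x = t := by
  obtain ⟨G, hmono, hper, hlift⟩ := hf
  obtain ⟨m, hm⟩ := coe_eq_coe_iff_exists_int.1 ((hlift x).trans h)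
  refine ⟨fun y => G y - m * 2, fun a b hab => sub_lt_sub_right (hmono hab) _,
    fun y => by simp only [hper]; ring, fun y => ?_, by simp only [hm]; ring⟩
  rw [← hlift, coe_eq_coe_iff_exists_int]
  exact ⟨-m, by push_cast; ring⟩

theorem surjective_of_lift (hf : Function.Surjective f) {G : ℝ → ℝ}
    (hper : ∀ y, G (y + 2) = G y + 2) (hlift : ∀ y : ℝ, (G y : S1) = f y) :
    Function.Surjective G := by
  have hper' : Function.Periodic (fun y => G y - y) 2 := fun y => by simp only [hper]; ring
  intro u
  obtain ⟨v, hv⟩ := hf u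
  obtain ⟨v, rfl⟩ := QuotientAddGroup.mk_surjective v
  obtain ⟨m, hm⟩ := coe_eq_coe_iff_exists_int.1 ((hlift v).trans hv)
  refine ⟨v - m * 2, ?_⟩
  have := hper'.int_mul m (v - m * 2)
  simp only [sub_add_cancel] at this
  linarith

theorem le_of_mapsTo_Icc (hf : OrientPreserving f) (hsurj : Function.Surjective f) {a b t : ℝ}
    (hab : b < a + 2) (hmaps : MapsTo f ((↑) '' Icc a b) ((↑) '' Icc a b)) (ht : t ∈ Icc a b)
    (hfa : f a = t) {y z : ℝ} (hy : y ∈ Icc a b) (hz : z ∈ Icc a b) (hyz : (z : S1) = f y) :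
    t ≤ z := by
  obtain ⟨G, hmono, hper, hlift, hGa⟩ := hf.exists_lift_eq hfa
  -- If `G w > b`, then `G` takes a value in the gap `(b, a + 2)` at a point of `[a, w]`, and no
  -- point of that gap projects into the arc.
  have hGb : ∀ w ∈ Icc a b, G w ≤ b := by
    intro w hw
    by_contra! hbw
    obtain ⟨u, hbu, hu⟩ := exists_between (lt_min hbw hab)
    obtain ⟨huw, hua⟩ := lt_min_iff.1 hu
    obtain ⟨v, hv⟩ := surjective_of_lift hsurj hper hlift u
    have hav : a < v := hmono.lt_iff_lt.1 (by rw [hGa, hv]; linarith [ht.2])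
    have hvw : v < w := hmono.lt_iff_lt.1 (by rwa [hv])
    obtain ⟨s, hs, hsu⟩ := hmaps ⟨v, ⟨hav.le, hvw.le.trans hw.2⟩, rfl⟩
    rw [← hlift, hv] at hsu
    have := (AddCircle.coe_eq_coe_iff_of_mem_Ico ⟨hs.1, by linarith [hs.2]⟩
      ⟨by linarith [hs.1, hs.2], hua⟩).1 hsu
    linarith [hs.2]
  have hty : t ≤ G y := hGa ▸ hmono.monotone hy.1
  have hzG : z = G y := injOn_coe_Icc hab hz ⟨ht.1.trans hty, hGb y hy⟩ (hyz.trans (hlift y).symm)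
  exact hzG ▸ hty

end OrientPreserving

theorem mul_sub_le_sub_of_hasDerivWithinAt {f : ℝ → ℝ} {a b L : ℝ}
    (hf : ∀ x ∈ Icc a b, ∃ c ∈ Ici L, HasDerivWithinAt f c (Icc a b) x) {x y : ℝ}
    (hx : x ∈ Icc a b) (hy : y ∈ Icc a b) (hxy : x ≤ y) : L * (y - x) ≤ f y - f x := by
  have hderiv : ∀ x ∈ interior (Icc a b), ∃ c ∈ Ici L, HasDerivAt f c x := by
    rw [interior_Icc]
    exact fun x hx => (hf x (Ioo_subset_Icc_self hx)).imp fun c ⟨hc, h⟩ =>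
      ⟨hc, h.hasDerivAt (Icc_mem_nhds hx.1 hx.2)⟩
  refine (convex_Icc a b).mul_sub_le_image_sub_of_le_deriv
    (fun x hx => (hf x hx).elim fun _ h => h.2.continuousWithinAt)
    (fun x hx => ?_) (fun x hx => ?_) x hx y hy hxy
  · obtain ⟨c, -, h⟩ := hderiv x hx
    exact h.differentiableAt.differentiableWithinAt
  · obtain ⟨c, hc, h⟩ := hderiv x hx
    exact h.deriv ▸ hc

theorem sub_le_of_lift_hasDerivWithinAt {f : S1 → S1} {a b L : ℝ} (hab : b < a + 2)
    {G : ℝ → ℝ} (hlift : ∀ x ∈ Icc a b, (G x : S1) = f x) (hmaps : MapsTo G (Icc a b) (Icc a b))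
    (hderiv : ∀ x ∈ Icc a b, ∃ c ∈ Ici L, HasDerivWithinAt G c (Icc a b) x) {y z : ℝ}
    (hy : y ∈ Icc a b) (hz : z ∈ Icc a b) (hyz : (z : S1) = f y) : L * (y - a) ≤ z - a := by
  have ha : a ∈ Icc a b := ⟨le_rfl, hy.1.trans hy.2⟩
  have hzG : z = G y := injOn_coe_Icc hab hz (hmaps hy) (hyz.trans (hlift y hy).symm)
  have := mul_sub_le_sub_of_hasDerivWithinAt hderiv ha hy hy.1
  linarith [(hmaps ha).1]

theorem pow_mul_le_of_le_or_mul_le {a : ℕ → ℝ} {r c : ℝ} (hr0 : 0 ≤ r) (hr1 : r ≤ 1)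
    (hc : 0 ≤ c) (h0 : c ≤ a 0) (h : ∀ j, c ≤ a (j + 1) ∨ r * a j ≤ a (j + 1)) (j : ℕ) :
    r ^ j * c ≤ a j := by
  induction j with
  | zero => simpa using h0
  | succ j ih =>
    rcases h j with h | h
    · calc r ^ (j + 1) * c ≤ 1 * c := by gcongr; exact pow_le_one₀ hr0 hr1
        _ ≤ a (j + 1) := by rwa [one_mul]
    · calc r ^ (j + 1) * c = r * (r ^ j * c) := by ring
        _ ≤ r * a j := by gcongr
        _ ≤ a (j + 1) := h

theorem exp_neg_one_le_one_sub_inv_pow (n : ℕ) : Real.exp (-1) ≤ (1 - (n : ℝ)⁻¹) ^ (n - 1) := by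
  cases n with
  | zero => simp [Real.exp_neg_one_lt_half.le.trans (by norm_num : (1 / 2 : ℝ) ≤ 1)]
  | succ m =>
    have hpos : 0 ≤ 1 - ((m + 1 : ℕ) : ℝ)⁻¹ := by
      rw [sub_nonneg]; exact inv_le_one_of_one_le₀ (by simp)
    have hrecip : (1 - ((m + 1 : ℕ) : ℝ)⁻¹) ^ m * (1 + (m : ℝ)⁻¹) ^ m = 1 := by
      rcases m.eq_zero_or_pos with rfl | hm
      · simp
      have : (1 - ((m + 1 : ℕ) : ℝ)⁻¹) * (1 + (m : ℝ)⁻¹) = 1 := by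
        push_cast
        field_simp
        ring
      rw [← mul_pow, this, one_pow]
    rw [Nat.add_sub_cancel]
    calc Real.exp (-1)
        = Real.exp (-1) * ((1 - ((m + 1 : ℕ) : ℝ)⁻¹) ^ m * (1 + (m : ℝ)⁻¹) ^ m) := by
          rw [hrecip, mul_one]
      _ ≤ Real.exp (-1) * ((1 - ((m + 1 : ℕ) : ℝ)⁻¹) ^ m * Real.exp 1) := by
          gcongr; exact Real.one_add_inv_pow_le_exp
      _ = (1 - ((m + 1 : ℕ) : ℝ)⁻¹) ^ m := by
          rw [mul_left_comm, ← Real.exp_add]; simp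

theorem one_quarter_le_of_pow_mul_le {n j : ℕ} (hn : 100 ≤ n) (hj : j ≤ n - 1) {z : ℝ}
    (h : (1 - 1 / (n : ℝ)) ^ j * (3 / 4 + 1 / n) ≤ z + 1 / n) : 1 / 4 ≤ z := by
  have hn' : (100 : ℝ) ≤ n := by exact_mod_cast hn
  have hinv : 1 / (n : ℝ) ≤ 1 / 100 := by gcongr
  have hpow : Real.exp (-1) ≤ (1 - 1 / (n : ℝ)) ^ j := by
    rw [one_div]
    exact (exp_neg_one_le_one_sub_inv_pow n).trans
      (pow_le_pow_of_le_one (by simp [inv_le_one_of_one_le₀ (by linarith : (1 : ℝ) ≤ n)])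
        (by simp) hj)
  nlinarith [Real.exp_neg_one_gt_d9, one_div_pos.2 (by linarith : (0 : ℝ) < n)]

/-- Fix `n ≥ 100`, `ν = 1/n`, and identify the arc `I = [−ν, 1+ν]` of
`S¹ = ℝ/2ℤ` with the real interval. Let `G(ω,x) = (σω, g_ω x)` be a skew product whose
fiber maps are orientation-preserving homeomorphisms with `g_ω(I) ⊆ I`, such that
`g_ω(−ν) > 3/4` whenever `ω₀ = 1`, and `g_ω` is differentiable on `I` with derivative in
`[1−ν, 1)` whenever `ω₀ = 0`. Then for every `k > n`, every `ω` and every `x ∈ I`: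
if `π(G^k(ω,x))` lies in the arc `(0, 1/4)`, then `ω_{k−n} = ⋯ = ω_{k−1} = 0`. -/
theorem stmt_6 (n : ℕ) (hn : 100 ≤ n) (ν : ℝ) (hν : ν = 1 / (n : ℝ))
    (g : Sig2 → S1 ≃ₜ S1)
    (hor : ∀ ω, OrientPreserving (g ω))
    (hmapsI : ∀ ω, MapsTo (g ω)
      ((fun x : ℝ => ((x : ℝ) : S1)) '' Icc (-ν) (1 + ν))
      ((fun x : ℝ => ((x : ℝ) : S1)) '' Icc (-ν) (1 + ν)))
    (hone : ∀ ω : Sig2, ω 0 = true →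
      ∃ t : ℝ, 3 / 4 < t ∧ t ≤ 1 + ν ∧ g ω (((-ν : ℝ) : S1)) = ((t : ℝ) : S1))
    (hzero : ∀ ω : Sig2, ω 0 = false →
      ∃ G : ℝ → ℝ,
        (∀ x ∈ Icc (-ν) (1 + ν), ((G x : ℝ) : S1) = g ω ((x : ℝ) : S1)) ∧
        (∀ x ∈ Icc (-ν) (1 + ν), G x ∈ Icc (-ν) (1 + ν)) ∧
        (∀ x ∈ Icc (-ν) (1 + ν), ∃ c ∈ Ico (1 - ν) 1,
          HasDerivWithinAt G c (Icc (-ν) (1 + ν)) x)) :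
    ∀ k : ℕ, n < k → ∀ ω : Sig2, ∀ x ∈ Icc (-ν) (1 + ν),
      ((skew g)^[k] (ω, ((x : ℝ) : S1))).2 ∈
        (fun t : ℝ => ((t : ℝ) : S1)) '' Ioo 0 (1 / 4) →
      ∀ i : ℕ, k - n ≤ i → i < k → ω (i : ℤ) = false := by
  intro k _ ω x hx hfin i hik hki
  have hν1 : ν ≤ 1 / 100 := by rw [hν]; gcongr; exact_mod_cast hn
  have hν0 : 0 < ν := by rw [hν]; positivity
  have hI : 1 + ν < -ν + 2 := by linarith
  obtain ⟨z, hzI, hz, hstep⟩ := exists_real_orbit hmapsI ω hx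
  have hreset (j : ℕ) (hj : ω j = true) : 3 / 4 + ν ≤ z (j + 1) + ν := by
    obtain ⟨t, ht, htI, hgt⟩ := hone (shift^[j] ω) (by rwa [shift_iterate_apply, zero_add])
    have := (hor _).le_of_mapsTo_Icc (g _).surjective hI (hmapsI _) ⟨by linarith, htI⟩ hgt
      (hzI j) (hzI (j + 1)) (hstep j)
    linarith
  have hcontract (j : ℕ) (hj : ω j = false) : (1 - ν) * (z j + ν) ≤ z (j + 1) + ν := by
    obtain ⟨G, hlift, hmaps, hderiv⟩ :=
      hzero (shift^[j] ω) (by rwa [shift_iterate_apply, zero_add])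
    simpa using sub_le_of_lift_hasDerivWithinAt hI hlift hmaps
      (fun y hy => (hderiv y hy).imp fun c ⟨hc, h⟩ => ⟨hc.1, h⟩) (hzI j) (hzI (j + 1)) (hstep j)
  by_contra hi
  have hbound := pow_mul_le_of_le_or_mul_le (a := fun j => z (i + 1 + j) + ν) (r := 1 - ν)
    (by linarith) (by linarith) (by linarith) (hreset i (by simpa using hi)) (fun j => by
      cases hω : ω ↑(i + 1 + j)
      · exact .inr (hcontract _ hω)
      · exact .inl (hreset _ hω)) (k - (i + 1))
  rw [show i + 1 + (k - (i + 1)) = k by omega, hν] at hbound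
  obtain ⟨w, hw, hwk⟩ := hfin
  have hwz : w = z k := injOn_coe_Icc hI ⟨by linarith [hw.1], by linarith [hw.2]⟩ (hzI k)
    (hwk.trans (hz k).symm)
  linarith [hw.2, one_quarter_le_of_pow_mul_le hn (by omega) hbound]
end

section
/- Fix an integer n ≥ 100 and set ν = 1/n. Let f₀, f₁ be orientation-preserving homeomorphisms of S¹ = ℝ/2ℤ whose restrictions to the arc [−ν, 1+ν] (identified with the real interval) are f₀(x) = (1 − ν/2)·x and f₁(x) = 1 + (1/4 − ν)·(x − 1), let f_t (t ∈ [0,1]) be an isotopy between them with f_t(x) = (1 − t²)·f₀(x) + t²·f₁(x) for x ∈ [−ν, 1+ν], and let F(b,x) = (h(b), f_{y(b)}(x)) be the associated almost step skew product over the solenoid. Let b ∈ B have forward itinerary ω = ω(b). Then for every integer k ≥ 2n and every x ∈ [0,1]: if π(F^k(b,x)) lies in the open arc (0, 1/4), then the word ω_{k−2n} ω_{k−2n+1} ⋯ ω_{k−1} contains no occurrence of the block '10' (i.e., there is no index i with k−2n ≤ i ≤ k−2, ω_i = 1 and ω_{i+1} = 0). -/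
open MeasureTheory Set Filter Topology Metric

instance : Fact ((0 : ℝ) < 1) := ⟨by norm_num⟩

/-- The base ambient space `(ℝ/ℤ) × ℂ`. -/
abbrev Base := AddCircle (1 : ℝ) × ℂ

/-- The solenoid map `h(y,z) = (2y, e^{2πiy} + λz)` (here `AddCircle.toCircle y = e^{2πiy}`). -/
noncomputable def solenoidMap (lam : ℝ) (b : Base) : Base :=
  (b.1 + b.1, (AddCircle.toCircle b.1 : ℂ) + lam * b.2)

/-- The solid torus `B = (ℝ/ℤ) × D(R)`. -/
def solidTorus (R : ℝ) : Set Base := univ ×ˢ closedBall (0 : ℂ) R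

/-- The representative in `[0,1)` of a point of `ℝ/ℤ`. -/
noncomputable def rep1 (y : AddCircle (1 : ℝ)) : ℝ :=
  ((AddCircle.equivIco (1 : ℝ) 0) y : ℝ)

/-- The family of fiber maps of the almost step skew product:
`f_y = f₀` on `[0, 3/8)`, `f_y = f_{8y−3}` on `[3/8, 1/2)`, `f_y = f₁` on `[1/2, 7/8)`,
and `f_y = f_{8−8y}` on `[7/8, 1)`. -/
noncomputable def fiberFam (f0 f1 : S1 → S1) (ft : ℝ → S1 → S1) (y : ℝ) : S1 → S1 :=
  if y < 3 / 8 then f0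
  else if y < 1 / 2 then ft (8 * y - 3)
  else if y < 7 / 8 then f1
  else ft (8 - 8 * y)

/-- The almost step skew product `F(b,x) = (h(b), f_{y(b)}(x))` over the solenoid. -/
noncomputable def almostStep (lam : ℝ) (f0 f1 : S1 → S1) (ft : ℝ → S1 → S1)
    (p : Base × S1) : Base × S1 :=
  (solenoidMap lam p.1, fiberFam f0 f1 ft (rep1 p.1.1) p.2)

/-- The forward itinerary of `b`: `ω_k = 0` iff the fractional part of `2^k·y(b)` lies in
`[0, 1/2)` (`false` = 0, `true` = 1). -/
noncomputable def itin (b : Base) (k : ℕ) : Bool :=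
  decide ((1 : ℝ) / 2 ≤ rep1 ((2 ^ k : ℕ) • b.1))

noncomputable def gmap (ν t x : ℝ) : ℝ :=
  (1 - t ^ 2) * ((1 - ν / 2) * x) + t ^ 2 * (1 + (1 / 4 - ν) * (x - 1))

noncomputable def stepVal (ν y x : ℝ) : ℝ :=
  if y < 3 / 8 then (1 - ν / 2) * x
  else if y < 1 / 2 then gmap ν (8 * y - 3) x
  else if y < 7 / 8 then 1 + (1 / 4 - ν) * (x - 1)
  else gmap ν (8 - 8 * y) x

lemma gmap_lb {ν t x : ℝ} (hν0 : 0 ≤ ν) (hν : ν ≤ 1/4) (ht0 : 0 ≤ t) (ht1 : t ≤ 1)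
    (hx0 : 0 ≤ x) (hx1 : x ≤ 1) : (1 - ν/2) * x ≤ gmap ν t x := by
  have hs0 : 0 ≤ t^2 := sq_nonneg t
  have hs1 : t^2 ≤ 1 := by nlinarith
  have hBA : (0:ℝ) ≤ (1 + (1/4 - ν) * (x - 1)) - (1 - ν/2) * x := by nlinarith
  have := mul_nonneg hs0 hBA
  unfold gmap; nlinarith

lemma gmap_ub {ν t x : ℝ} (hν0 : 0 ≤ ν) (hν : ν ≤ 1/4) (ht0 : 0 ≤ t) (ht1 : t ≤ 1)
    (hx0 : 0 ≤ x) (hx1 : x ≤ 1) : gmap ν t x ≤ 1 := by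
  have hs0 : 0 ≤ t^2 := sq_nonneg t
  have hs1 : t^2 ≤ 1 := by nlinarith
  have hA : (1 - ν/2) * x ≤ 1 := by nlinarith
  have hB : 1 + (1/4 - ν) * (x - 1) ≤ 1 := by nlinarith
  unfold gmap; nlinarith

lemma stepVal_lb {ν y x : ℝ} (hν0 : 0 ≤ ν) (hν : ν ≤ 1/4) (hy0 : 0 ≤ y) (hy1 : y < 1)
    (hx0 : 0 ≤ x) (hx1 : x ≤ 1) : (1 - ν/2) * x ≤ stepVal ν y x := by
  unfold stepVal
  split_ifs with h1 h2 h3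
  · exact le_rfl
  · exact gmap_lb hν0 hν (by linarith) (by linarith) hx0 hx1
  · nlinarith
  · exact gmap_lb hν0 hν (by linarith) (by linarith) hx0 hx1

lemma stepVal_mem {ν y x : ℝ} (hν0 : 0 ≤ ν) (hν : ν ≤ 1/4) (hy0 : 0 ≤ y) (hy1 : y < 1)
    (hx0 : 0 ≤ x) (hx1 : x ≤ 1) : stepVal ν y x ∈ Icc (0:ℝ) 1 := by
  constructor
  · have := stepVal_lb hν0 hν hy0 hy1 hx0 hx1
    nlinarith
  · unfold stepVal
    split_ifs with h1 h2 h3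
    · nlinarith
    · exact gmap_ub hν0 hν (by linarith) (by linarith) hx0 hx1
    · nlinarith
    · exact gmap_ub hν0 hν (by linarith) (by linarith) hx0 hx1

lemma stepVal_mid {ν y x : ℝ} (hν0 : 0 ≤ ν) (hν : ν ≤ 1/4) (h1 : 1/2 ≤ y) (h2 : y < 7/8)
    (hx0 : 0 ≤ x) (hx1 : x ≤ 1) : 3/4 ≤ stepVal ν y x := by
  unfold stepVal
  rw [if_neg (by linarith), if_neg (by linarith), if_pos h2]
  nlinarith

noncomputable def traj (ν : ℝ) (Y : ℕ → ℝ) (x : ℝ) : ℕ → ℝ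
  | 0 => x
  | j + 1 => stepVal ν (Y j) (traj ν Y x j)

lemma third_le_pow (n : ℕ) (hn : 100 ≤ n) (ν : ℝ) (hν : ν = 1/(n:ℝ)) :
    (1/3 : ℝ) ≤ (1 - ν/2) ^ (2*n - 1) := by
  have hn0 : (100:ℝ) ≤ n := by exact_mod_cast hn
  set j : ℕ := 2*n - 1 with hjdef
  have hjc : (j:ℝ) = 2*(n:ℝ) - 1 := by
    have : (j:ℕ) + 1 = 2*n := by omega
    have := congrArg (fun m : ℕ => (m:ℝ)) this
    push_cast at this; linarith
  have hjpos : (0:ℝ) < j := by rw [hjc]; linarith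
  have hjne : (j:ℝ) ≠ 0 := ne_of_gt hjpos
  have key : (1 + 1/(j:ℝ))^j ≤ 3 := by
    have h1 : (1 + 1/(j:ℝ)) ≤ Real.exp (1/j) := by
      have := Real.add_one_le_exp (1/(j:ℝ)); linarith
    have h2 : (1 + 1/(j:ℝ))^j ≤ Real.exp (1/j)^j :=
      pow_le_pow_left₀ (by positivity) h1 j
    have h3 : Real.exp (1/(j:ℝ))^j = Real.exp 1 := by
      rw [← Real.exp_nat_mul]; congr 1; field_simp
    rw [h3] at h2
    exact h2.trans ((Real.exp_one_lt_d9.le).trans (by norm_num))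
  have heq : 1 - ν/2 = (1 + 1/(j:ℝ))⁻¹ := by
    rw [hν]
    field_simp
    rw [hjc]; ring
  have hz : (0:ℝ) < (1 + 1/(j:ℝ))^j := by positivity
  rw [heq, inv_pow, one_div]
  exact inv_anti₀ hz key

/-- Fix `n ≥ 100`, `ν = 1/n`. Let `f₀, f₁` be orientation-preserving
homeomorphisms of `S¹ = ℝ/2ℤ` given on the arc `[−ν, 1+ν]` by `f₀(x) = (1 − ν/2)x` and
`f₁(x) = 1 + (1/4 − ν)(x−1)`, let `f_t` be an isotopy between them with
`f_t(x) = (1−t²)f₀(x) + t²f₁(x)` on `[−ν, 1+ν]`, and let `F` be the associated almost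
step skew product over the solenoid. Let `b ∈ B` have forward itinerary `ω`. Then for
every `k ≥ 2n` and every `x ∈ [0,1]`: if `π(F^k(b,x))` lies in the arc `(0, 1/4)`, then
the word `ω_{k−2n} ⋯ ω_{k−1}` contains no occurrence of the block `10`. -/
theorem stmt_17 (n : ℕ) (hn : 100 ≤ n) (ν : ℝ) (hν : ν = 1 / (n : ℝ))
    (R lam : ℝ) (hR : 2 ≤ R) (hlam0 : 0 < lam) (hlam1 : lam < 0.1)
    (hlamR : lam * R < 1)
    (f0 f1 : S1 ≃ₜ S1) (hor0 : OrientPreserving f0) (hor1 : OrientPreserving f1)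
    (hf0 : ∀ x ∈ Icc (-ν) (1 + ν),
      f0 ((x : ℝ) : S1) = (((1 - ν / 2) * x : ℝ) : S1))
    (hf1 : ∀ x ∈ Icc (-ν) (1 + ν),
      f1 ((x : ℝ) : S1) = ((1 + (1 / 4 - ν) * (x - 1) : ℝ) : S1))
    (ft : ℝ → S1 → S1) (hft0 : ft 0 = ⇑f0) (hft1 : ft 1 = ⇑f1)
    (hftcont : ContinuousOn (fun q : ℝ × S1 => ft q.1 q.2) (Icc (0 : ℝ) 1 ×ˢ univ))
    (hfthomeo : ∀ t ∈ Icc (0 : ℝ) 1, ∃ e : S1 ≃ₜ S1, ft t = ⇑e)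
    (hftI : ∀ t ∈ Icc (0 : ℝ) 1, ∀ x ∈ Icc (-ν) (1 + ν),
      ft t ((x : ℝ) : S1)
        = (((1 - t ^ 2) * ((1 - ν / 2) * x)
            + t ^ 2 * (1 + (1 / 4 - ν) * (x - 1)) : ℝ) : S1))
    (b : Base) (hb : b ∈ solidTorus R) :
    ∀ k : ℕ, 2 * n ≤ k → ∀ x ∈ Icc (0 : ℝ) 1,
      ((almostStep lam f0 f1 ft)^[k] (b, ((x : ℝ) : S1))).2 ∈
        (fun t : ℝ => ((t : ℝ) : S1)) '' Ioo 0 (1 / 4) →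
      ∀ i : ℕ, k - 2 * n ≤ i → i ≤ k - 2 →
        ¬(itin b i = true ∧ itin b (i + 1) = false) := by
  have hncast : (100 : ℝ) ≤ (n : ℝ) := by exact_mod_cast hn
  have hν0 : 0 < ν := by rw [hν]; positivity
  have hν4 : ν ≤ 1 / 4 := by
    rw [hν]
    calc (1 : ℝ) / n ≤ 1 / 100 := by
          apply one_div_le_one_div_of_le <;> linarith
      _ ≤ 1 / 4 := by norm_num
  obtain ⟨y0, hy0⟩ := QuotientAddGroup.mk_surjective b.1
  set Y : ℕ → ℝ := fun j => Int.fract ((2 : ℝ) ^ j * y0) with hYdef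
  have hYmem : ∀ j, Y j ∈ Ico (0 : ℝ) 1 :=
    fun j => ⟨Int.fract_nonneg _, Int.fract_lt_one _⟩
  have hrepc : ∀ r : ℝ, rep1 ((r : ℝ) : AddCircle (1 : ℝ)) = Int.fract r := by
    intro r
    unfold rep1
    rw [AddCircle.coe_equivIco_mk_apply]
    simp
  have hrep : ∀ j : ℕ, rep1 ((2 ^ j : ℕ) • b.1) = Y j := by
    intro j
    have h1 : ((2 ^ j : ℕ) • b.1) = (((2 : ℝ) ^ j * y0 : ℝ) : AddCircle (1 : ℝ)) := by
      rw [← hy0]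
      have : (((2 ^ j : ℕ) • y0 : ℝ) : AddCircle (1 : ℝ))
          = (2 ^ j : ℕ) • ((y0 : ℝ) : AddCircle (1 : ℝ)) := by
        exact_mod_cast (map_nsmul (QuotientAddGroup.mk' _) (2 ^ j) y0).symm
      rw [← this]
      congr 1
      push_cast [nsmul_eq_mul]
      ring
    rw [h1, hrepc]
  -- the bridge between fiberFam and stepVal
  have hbridge : ∀ y ∈ Ico (0 : ℝ) 1, ∀ z ∈ Icc (0 : ℝ) 1,
      fiberFam (⇑f0) (⇑f1) ft y ((z : ℝ) : S1) = ((stepVal ν y z : ℝ) : S1) := by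
    intro y hy z hz
    have hzI : z ∈ Icc (-ν) (1 + ν) := ⟨by linarith [hz.1], by linarith [hz.2]⟩
    unfold fiberFam stepVal
    split_ifs with h1 h2 h3
    · exact hf0 z hzI
    · rw [hftI (8 * y - 3) ⟨by linarith [hy.1], by linarith [hy.2]⟩ z hzI]
      rfl
    · exact hf1 z hzI
    · rw [hftI (8 - 8 * y) ⟨by linarith [hy.2], by linarith [hy.1]⟩ z hzI]
      rfl
  intro k hk x hx hmem i hi1 hi2 hcon
  obtain ⟨hc1, hc2⟩ := hcon
  -- the key iterate computation
  have key : ∀ j : ℕ,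
      ((almostStep lam (⇑f0) (⇑f1) ft)^[j] (b, ((x : ℝ) : S1))
        = ((solenoidMap lam)^[j] b, ((traj ν Y x j : ℝ) : S1)))
      ∧ ((solenoidMap lam)^[j] b).1 = (2 ^ j : ℕ) • b.1
      ∧ traj ν Y x j ∈ Icc (0 : ℝ) 1 := by
    intro j
    induction j with
    | zero =>
      refine ⟨rfl, ?_, hx⟩
      simp
    | succ j ih =>
      obtain ⟨ih1, ih2, ih3⟩ := ih
      refine ⟨?_, ?_, ?_⟩
      · rw [Function.iterate_succ_apply', ih1, Function.iterate_succ_apply']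
        unfold almostStep
        simp only
        congr 1
        rw [ih2, hrep j]
        exact hbridge (Y j) (hYmem j) _ ih3
      · rw [Function.iterate_succ_apply']
        have hfst : (solenoidMap lam ((solenoidMap lam)^[j] b)).1
            = ((solenoidMap lam)^[j] b).1 + ((solenoidMap lam)^[j] b).1 := rfl
        rw [hfst, ih2, ← add_nsmul]
        congr 1
        rw [pow_succ]
        ring
      · exact stepVal_mem hν0.le hν4 (hYmem j).1 (hYmem j).2 ih3.1 ih3.2
  -- extract itinerary information
  have h1 : 1 / 2 ≤ Y i := by
    have := hrep i
    simp only [itin, decide_eq_true_eq] at hc1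
    rwa [this] at hc1
  have h2 : ¬ (1 / 2 ≤ Y (i + 1)) := by
    have := hrep (i + 1)
    simp only [itin, decide_eq_false_iff_not] at hc2
    rwa [this] at hc2
  have hYi1 : Y i < 1 := (hYmem i).2
  -- doubling relation
  have hfr : Y (i + 1) = Int.fract (2 * Y i) := by
    have hz := Int.fract_add_floor ((2 : ℝ) ^ i * y0)
    have h : (2 : ℝ) ^ (i + 1) * y0
        = 2 * Int.fract ((2 : ℝ) ^ i * y0) + ((2 * ⌊(2 : ℝ) ^ i * y0⌋ : ℤ) : ℝ) := by
      push_cast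
      rw [pow_succ]
      linarith [hz]
    show Int.fract ((2 : ℝ) ^ (i + 1) * y0) = _
    rw [h, Int.fract_add_intCast]
  have h34 : Y i < 3 / 4 := by
    have hfe : Int.fract (2 * Y i) = 2 * Y i - 1 := by
      have he : Int.fract (2 * Y i - 1) = Int.fract (2 * Y i) := by
        rw [show (2 * Y i - 1) = 2 * Y i - ((1 : ℤ) : ℝ) by norm_num, Int.fract_sub_intCast]
      rw [← he, Int.fract_eq_self.2 ⟨by linarith, by linarith⟩]
    rw [hfr, hfe] at h2
    push_neg at h2
    linarith
  -- growth estimate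
  have grow : ∀ m : ℕ, 3 / 4 * (1 - ν / 2) ^ m ≤ traj ν Y x (i + 1 + m) := by
    intro m
    induction m with
    | zero =>
      have hmem' := (key i).2.2
      have := stepVal_mid hν0.le hν4 h1 (by linarith) hmem'.1 hmem'.2
      simpa [traj] using this
    | succ m ih =>
      have hmemj := (key (i + 1 + m)).2.2
      have hstep := stepVal_lb hν0.le hν4 (hYmem (i + 1 + m)).1 (hYmem (i + 1 + m)).2
        hmemj.1 hmemj.2
      have hstep' : (1 - ν / 2) * traj ν Y x (i + 1 + m) ≤ traj ν Y x (i + 1 + (m + 1)) := by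
        show _ ≤ stepVal ν (Y (i + 1 + m)) (traj ν Y x (i + 1 + m))
        exact hstep
      calc 3 / 4 * (1 - ν / 2) ^ (m + 1)
          = (1 - ν / 2) * (3 / 4 * (1 - ν / 2) ^ m) := by ring
        _ ≤ (1 - ν / 2) * traj ν Y x (i + 1 + m) :=
            mul_le_mul_of_nonneg_left ih (by linarith)
        _ ≤ traj ν Y x (i + 1 + (m + 1)) := hstep'
  -- conclude
  obtain ⟨t, ht, hteq⟩ := hmem
  have hfk : ((almostStep lam (⇑f0) (⇑f1) ft)^[k] (b, ((x : ℝ) : S1))).2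
      = ((traj ν Y x k : ℝ) : S1) := by rw [(key k).1]
  rw [hfk] at hteq
  have hik : i + 1 ≤ k := by omega
  have hmk : i + 1 + (k - (i + 1)) = k := by omega
  have hg := grow (k - (i + 1))
  rw [hmk] at hg
  have hexp : (1 - ν / 2) ^ (2 * n - 1) ≤ (1 - ν / 2) ^ (k - (i + 1)) :=
    pow_le_pow_of_le_one (by linarith) (by linarith) (by omega)
  have h3 := third_le_pow n hn ν hν
  have hthird : (1 / 3 : ℝ) ≤ (1 - ν / 2) ^ (k - (i + 1)) := le_trans h3 hexp
  have hlow : (1 / 4 : ℝ) ≤ traj ν Y x k := by nlinarith [hg, hthird]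
  have hkmem := (key k).2.2
  have htI : t ∈ Ico (0 : ℝ) (0 + 2) := ⟨ht.1.le, by norm_num; linarith [ht.2]⟩
  have hkI : traj ν Y x k ∈ Ico (0 : ℝ) (0 + 2) :=
    ⟨hkmem.1, by norm_num; linarith [hkmem.2]⟩
  have heq := (AddCircle.coe_eq_coe_iff_of_mem_Ico htI hkI).1 hteq
  have ht2 := ht.2
  rw [heq] at ht2
  linarith
end
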